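/- arXiv:1103.3641 — 4 statements merged into one kernel-verified Lean document; each statement's English description precedes it below -/
import Mathlib

section
/- Let H1 be a parity-check matrix of length n, and define the 2n-column matrix H2 as the block matrix with first block row [H1 | 0] and second block row [I_n | I_n]. If p = (q, r) ∈ ℝ^{2n} lies in the fundamental cone K(H2), then q = r and q ∈ K(H1). -/
open Finset

def fundCone {J I : Type*} [Fintype I] [DecidableEq I]
    (H : J → I → ZMod 2) : Set (I → ℝ) :=
  {x | (∀ i, 0 ≤ x i) ∧
    ∀ j ℓ, H j ℓ = 1 →
      x ℓ ≤ ∑ i ∈ Finset.univ.filter (fun i => H j i = 1 ∧ i ≠ ℓ), x i}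

section FundCone

variable {J K I I' : Type*} [Fintype I] [DecidableEq I] [Fintype I'] [DecidableEq I']

theorem fundCone_sumElim (H : J → I → ZMod 2) (H' : K → I → ZMod 2) :
    fundCone (Sum.elim H H') = fundCone H ∩ fundCone H' := by
  ext x
  simp only [fundCone, Set.mem_ofPred_eq, Set.mem_inter_iff, Sum.forall, Sum.elim_inl,
    Sum.elim_inr]
  tauto

theorem mem_fundCone_of_mem_fundCone_sumElim_zero {H : J → I → ZMod 2} {x : I ⊕ I' → ℝ}
    (hx : x ∈ fundCone (fun j => Sum.elim (H j) (fun _ => 0))) :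
    (fun i => x (Sum.inl i)) ∈ fundCone H := by
  obtain ⟨hnonneg, hrows⟩ := hx
  refine ⟨fun i => hnonneg _, fun j ℓ hjℓ => (hrows j (Sum.inl ℓ) hjℓ).trans_eq ?_⟩
  rw [sum_filter, sum_filter, Fintype.sum_sum_type]
  simp

theorem apply_eq_of_mem_fundCone_of_support_pair {H : J → I → ZMod 2} {x : I → ℝ}
    (hx : x ∈ fundCone H) {j : J} {a b : I} (hab : a ≠ b)
    (hsupp : ∀ i, H j i = 1 ↔ i = a ∨ i = b) : x a = x b := by
  have hfilter : ∀ c d, c ≠ d → (∀ i, H j i = 1 ↔ i = c ∨ i = d) →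
      univ.filter (fun i => H j i = 1 ∧ i ≠ c) = {d} := by
    intro c d hcd hcd_supp
    ext i
    simp only [mem_filter, mem_univ, true_and, mem_singleton, hcd_supp]
    constructor
    · rintro ⟨rfl | rfl, _⟩ <;> tauto
    · rintro rfl
      exact ⟨Or.inr rfl, hcd.symm⟩
  have hab_le := hx.2 j a ((hsupp a).2 (Or.inl rfl))
  have hba_le := hx.2 j b ((hsupp b).2 (Or.inr rfl))
  rw [hfilter a b hab hsupp, sum_singleton] at hab_le
  rw [hfilter b a hab.symm (fun i => (hsupp i).trans or_comm), sum_singleton] at hba_le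
  exact le_antisymm hab_le hba_le

end FundCone

theorem stmt4 {J I : Type*} [Fintype I] [DecidableEq I]
    (H1 : J → I → ZMod 2)
    (p : I ⊕ I → ℝ)
    (hp : p ∈ fundCone (Sum.elim (fun j => Sum.elim (H1 j) (fun _ => 0))
          (fun k => fun i => if i = Sum.inl k ∨ i = Sum.inr k then 1 else 0))) :
    (∀ i, p (Sum.inl i) = p (Sum.inr i)) ∧
    (fun i => p (Sum.inl i)) ∈ fundCone H1 := by
  rw [fundCone_sumElim] at hp
  obtain ⟨hH1, hId⟩ := hp
  refine ⟨fun k => apply_eq_of_mem_fundCone_of_support_pair hId (j := k) Sum.inl_ne_inr ?_,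
    mem_fundCone_of_mem_fundCone_sumElim_zero hH1⟩
  simp
end

section
/- Let H be a binary m×n parity-check matrix such that a subset of its rows forms the incidence matrix of a partial (w_c, λ) design with λ ≥ 1: every column index is contained in exactly w_c of these rows' supports, and every pair of distinct column indices is contained in at most λ of these rows' supports. Then every nonzero x in the fundamental cone K(H) satisfies w_maxfrac(x) ≥ 1 + w_c/λ. -/
/- Let `ℓ` be a coordinate where `x` is maximal. Adding up the cone inequality
`x ℓ ≤ ∑_{i ∈ I_j \ {ℓ}} x i` over the `w_c` design rows through `ℓ` counts each `x i` once per
row through both `i` and `ℓ`, hence at most `λ` times: `w_c · x ℓ ≤ λ · ∑_{i ≠ ℓ} x i`. Adding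
`x ℓ` to both sides and dividing by `x ℓ = max x` gives the bound. -/

open Finset

noncomputable def wmaxfrac {I : Type*} [Fintype I] [Nonempty I] (x : I → ℝ) : ℝ :=
  (∑ i, x i) / Finset.univ.sup' Finset.univ_nonempty x

section FundamentalCone

variable {J I : Type*} [Fintype I] [DecidableEq I] {H : J → I → ZMod 2} {x : I → ℝ}

theorem card_filter_mul_le_sum_of_mem_fundCone (hx : x ∈ fundCone H) (S : Finset J) (ℓ : I) :
    #(S.filter fun j => H j ℓ = 1) * x ℓ ≤
      ∑ i ∈ univ.erase ℓ, #(S.filter fun j => H j i = 1 ∧ H j ℓ = 1) * x i := by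
  calc (#(S.filter fun j => H j ℓ = 1) : ℝ) * x ℓ
      ≤ ∑ j ∈ S.filter (fun j => H j ℓ = 1),
          ∑ i ∈ univ.filter (fun i => H j i = 1 ∧ i ≠ ℓ), x i := by
        rw [← nsmul_eq_mul]
        exact card_nsmul_le_sum _ _ _ fun j hj => hx.2 j ℓ (mem_filter.mp hj).2
    _ = ∑ i ∈ univ.erase ℓ, ∑ _j ∈ S.filter (fun j => H j i = 1 ∧ H j ℓ = 1), x i :=
        sum_comm' fun j i => by simp only [mem_filter, mem_univ, mem_erase]; tauto
    _ = _ := by simp only [sum_const, nsmul_eq_mul]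

theorem mul_le_mul_sum_erase_of_mem_fundCone (hx : x ∈ fundCone H) (S : Finset J) (ℓ : I)
    {wc lam : ℕ} (hcol : wc ≤ #(S.filter fun j => H j ℓ = 1))
    (hpair : ∀ i ≠ ℓ, #(S.filter fun j => H j i = 1 ∧ H j ℓ = 1) ≤ lam) :
    (wc : ℝ) * x ℓ ≤ lam * ∑ i ∈ univ.erase ℓ, x i := by
  calc (wc : ℝ) * x ℓ ≤ #(S.filter fun j => H j ℓ = 1) * x ℓ := by
        gcongr
        exact hx.1 ℓ
    _ ≤ ∑ i ∈ univ.erase ℓ, #(S.filter fun j => H j i = 1 ∧ H j ℓ = 1) * x i :=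
        card_filter_mul_le_sum_of_mem_fundCone hx S ℓ
    _ ≤ ∑ i ∈ univ.erase ℓ, lam * x i := by
        gcongr with i hi
        · exact hx.1 i
        · exact hpair i (ne_of_mem_erase hi)
    _ = lam * ∑ i ∈ univ.erase ℓ, x i := (mul_sum _ _ _).symm

end FundamentalCone

theorem one_add_le_wmaxfrac {I : Type*} [Fintype I] [DecidableEq I] [Nonempty I] {x : I → ℝ}
    (hx : ∀ i, 0 ≤ x i) (hx0 : x ≠ 0) {c : ℝ}
    (h : ∀ ℓ, c * x ℓ ≤ ∑ i ∈ univ.erase ℓ, x i) : 1 + c ≤ wmaxfrac x := by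
  obtain ⟨ℓ, -, hℓ⟩ := exists_mem_eq_sup' univ_nonempty x
  obtain ⟨i, hi⟩ := Function.ne_iff.mp hx0
  have hmax : 0 < x ℓ :=
    ((hx i).lt_of_ne' hi).trans_le (hℓ ▸ le_sup' x (mem_univ i))
  rw [wmaxfrac, hℓ, le_div_iff₀ hmax, ← add_sum_erase _ _ (mem_univ ℓ)]
  linarith [h ℓ]

theorem stmt6_general {J I : Type*} [Fintype I] [DecidableEq I] [Nonempty I]
    (H : J → I → ZMod 2) (S : Finset J) (wc lam : ℕ)
    (hcol : ∀ i, (S.filter fun j => H j i = 1).card = wc)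
    (hpair : ∀ i i' : I, i ≠ i' → (S.filter fun j => H j i = 1 ∧ H j i' = 1).card ≤ lam)
    (x : I → ℝ) (hx : x ∈ fundCone H) (hx0 : x ≠ 0) :
    1 + (wc : ℝ) / lam ≤ wmaxfrac x := by
  refine one_add_le_wmaxfrac hx.1 hx0 fun ℓ => ?_
  rw [div_mul_eq_mul_div]
  refine div_le_of_le_mul₀ lam.cast_nonneg (sum_nonneg fun i _ => hx.1 i) ?_
  rw [mul_comm _ (lam : ℝ)]
  exact mul_le_mul_sum_erase_of_mem_fundCone hx S ℓ (hcol ℓ).ge fun i hi => hpair i ℓ hi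

theorem stmt6 {J I : Type*} [Fintype J] [Fintype I] [DecidableEq I] [Nonempty I]
    (H : J → I → ZMod 2) (S : Finset J) (wc lam : ℕ) (hlam : 1 ≤ lam)
    (hcol : ∀ i, (S.filter fun j => H j i = 1).card = wc)
    (hpair : ∀ i i' : I, i ≠ i' → (S.filter fun j => H j i = 1 ∧ H j i' = 1).card ≤ lam)
    (x : I → ℝ) (hx : x ∈ fundCone H) (hx0 : x ≠ 0) :
    1 + (wc : ℝ) / lam ≤ wmaxfrac x :=
  stmt6_general H S wc lam hcol hpair x hx hx0
end

section
/- Let x ∈ ℝ^n be a nonzero nonnegative vector such that (Σ_i x_i)²/(Σ_i x_i²) = (Σ_i x_i)/(max_i x_i). Then x is a nonnegative scalar multiple of a 0-1 vector, i.e., every coordinate of x is either 0 or equal to max_i x_i. -/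
/-! Since `0 ≤ xᵢ ≤ M := maxᵢ xᵢ`, each term `xᵢ (M - xᵢ)` is nonnegative, i.e. `∑ xᵢ² ≤ M ∑ xᵢ`.
Clearing denominators, the hypothesis says this is an equality, so every term vanishes and
`xᵢ ∈ {0, M}`. -/

open Finset

section OrderedField

variable {ι R : Type*} [Field R] [LinearOrder R] [IsStrictOrderedRing R]

theorem Finset.forall_eq_zero_or_eq_of_sum_sq_eq_mul_sum {s : Finset ι} {x : ι → R} {M : R}
    (h0 : ∀ i ∈ s, 0 ≤ x i) (hle : ∀ i ∈ s, x i ≤ M)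
    (h : ∑ i ∈ s, x i ^ 2 = M * ∑ i ∈ s, x i) :
    ∀ i ∈ s, x i = 0 ∨ x i = M := by
  have hsum : ∑ i ∈ s, x i * (M - x i) = 0 := by
    simp only [mul_sub, sum_sub_distrib, ← sum_mul, ← pow_two, h]
    ring
  have hterm := (sum_eq_zero_iff_of_nonneg fun i hi =>
    mul_nonneg (h0 i hi) (sub_nonneg.2 (hle i hi))).1 hsum
  intro i hi
  rcases mul_eq_zero.1 (hterm i hi) with hx | hx
  · exact Or.inl hx
  · exact Or.inr (sub_eq_zero.1 hx).symm

end OrderedField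

theorem stmt9 {I : Type*} [Fintype I] [Nonempty I]
    (x : I → ℝ) (h0 : ∀ i, 0 ≤ x i) (hne : x ≠ 0)
    (heq : (∑ i, x i) ^ 2 / (∑ i, x i ^ 2) = wmaxfrac x) :
    ∀ i, x i = 0 ∨ x i = Finset.univ.sup' Finset.univ_nonempty x := by
  set M := univ.sup' univ_nonempty x
  have hle : ∀ i, x i ≤ M := fun i => le_sup' x (mem_univ i)
  obtain ⟨i₀, hi₀⟩ : ∃ i, 0 < x i := by
    by_contra! h
    exact hne (funext fun i => le_antisymm (h i) (h0 i))
  have hM : 0 < M := hi₀.trans_le (hle i₀)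
  have hsum : 0 < ∑ i, x i := sum_pos' (fun i _ => h0 i) ⟨i₀, mem_univ _, hi₀⟩
  have hsumsq : 0 < ∑ i, x i ^ 2 := sum_pos' (fun i _ => sq_nonneg _) ⟨i₀, mem_univ _, by positivity⟩
  rw [wmaxfrac, div_eq_div_iff hsumsq.ne' hM.ne'] at heq
  have hsq : ∑ i, x i ^ 2 = M * ∑ i, x i :=
    mul_left_cancel₀ hsum.ne' (by linear_combination -heq)
  intro i
  exact forall_eq_zero_or_eq_of_sum_sq_eq_mul_sum (fun i _ => h0 i) (fun i _ => hle i) hsq i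
    (mem_univ i)
end

section
/- Let H be a binary parity-check matrix of a code C in which every row has weight exactly 2, and suppose C ≠ {0}. Then the minimum max-fractional weight of H equals the minimum Hamming distance of C; in particular every nonzero x in the fundamental cone K(H) satisfies (Σ_i x_i)/(max_i x_i) ≥ d(C). -/
open Finset

/-!
With rows of weight two, the cone inequalities of a row `{a, b}` read `x a ≤ x b` and
`x b ≤ x a`, and the parity check of a row reads `c a = c b`. So points of the cone and
codewords are both exactly the (nonnegative, resp. binary) functions constant along every row.
A codeword's support indicator therefore lies in the cone, with max-fractional weight equal
to its Hamming weight. Conversely, for a nonzero `x` in the cone with maximum `M`, the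
indicator of the level set `{x = M}` is a nonzero codeword, and `x` has mass at least
`M · #{x = M}` on that set.
-/

section RowWeightTwo

variable {I : Type*} [DecidableEq I]

lemma forall_le_sum_erase_iff_of_card_eq_two {α : Type*} [AddCommMonoid α] [PartialOrder α]
    {s : Finset I} (hs : #s = 2) (x : I → α) :
    (∀ ℓ ∈ s, x ℓ ≤ ∑ i ∈ s.erase ℓ, x i) ↔ ∀ a ∈ s, ∀ b ∈ s, x a = x b := by
  obtain ⟨p, q, hpq, rfl⟩ := card_eq_two.1 hs
  simp only [mem_insert, mem_singleton, forall_eq_or_imp, forall_eq, erase_insert_eq_erase,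
    erase_insert_of_ne hpq, erase_singleton, insert_empty,
    erase_eq_of_notMem (notMem_singleton.2 hpq), sum_singleton, le_antisymm_iff, le_refl,
    and_true, true_and]
  tauto

lemma sum_eq_zero_iff_of_card_eq_two {R : Type*} [Ring R] [CharP R 2]
    {s : Finset I} (hs : #s = 2) (c : I → R) :
    ∑ i ∈ s, c i = 0 ↔ ∀ a ∈ s, ∀ b ∈ s, c a = c b := by
  obtain ⟨p, q, hpq, rfl⟩ := card_eq_two.1 hs
  simp only [sum_pair hpq, add_eq_zero_iff_eq_neg, CharTwo.neg_eq, mem_insert, mem_singleton,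
    forall_eq_or_imp, forall_eq]
  grind

end RowWeightTwo

lemma sum_mul_eq_sum_filter_eq_one {I : Type*} [Fintype I] (h c : I → ZMod 2) :
    ∑ i, h i * c i = ∑ i ∈ univ.filter (h · = 1), c i := by
  rw [sum_filter]
  refine sum_congr rfl fun i _ => ?_
  obtain h0 | h1 : h i = 0 ∨ h i = 1 := by generalize h i = a; decide +revert
  · simp [h0]
  · simp [h1]

section ParityCheck

variable {J I : Type*} {H : J → I → ZMod 2}

variable (H) in
def RowConstant {α : Type*} (f : I → α) : Prop :=
  ∀ j a, H j a = 1 → ∀ b, H j b = 1 → f a = f b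

lemma RowConstant.comp {α β : Type*} {f : I → α} (hf : RowConstant H f) (g : α → β) :
    RowConstant H (g ∘ f) :=
  fun j a ha b hb => congrArg g (hf j a ha b hb)

variable [Fintype I] [DecidableEq I]

lemma mem_fundCone_iff (hrow : ∀ j, #(univ.filter fun i => H j i = 1) = 2) {x : I → ℝ} :
    x ∈ fundCone H ↔ (∀ i, 0 ≤ x i) ∧ RowConstant H x := by
  have herase : ∀ j ℓ, univ.filter (fun i => H j i = 1 ∧ i ≠ ℓ) =
      (univ.filter fun i => H j i = 1).erase ℓ := by
    intro j ℓ; ext; simp [and_comm]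
  simp only [fundCone, Set.mem_ofPred_eq, herase]
  refine and_congr_right' (forall_congr' fun j => ?_)
  simpa using forall_le_sum_erase_iff_of_card_eq_two (hrow j) x

lemma isCodeword_iff_rowConstant (hrow : ∀ j, #(univ.filter fun i => H j i = 1) = 2)
    {c : I → ZMod 2} : (∀ j, ∑ i, H j i * c i = 0) ↔ RowConstant H c := by
  simp only [sum_mul_eq_sum_filter_eq_one]
  refine forall_congr' fun j => ?_
  simpa using sum_eq_zero_iff_of_card_eq_two (hrow j) c

end ParityCheck

section MaxFractionalWeight

variable {I : Type*} [Fintype I] [Nonempty I]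

lemma card_filter_eq_sup'_le_wmaxfrac {x : I → ℝ} (hx : ∀ i, 0 ≤ x i) (hx0 : x ≠ 0) :
    (#(univ.filter fun i => x i = univ.sup' univ_nonempty x) : ℝ) ≤ wmaxfrac x := by
  set M := univ.sup' univ_nonempty x
  set S := univ.filter fun i => x i = M
  have hM : 0 < M := by
    obtain ⟨i, hi⟩ := Function.ne_iff.1 hx0
    exact ((hx i).lt_of_ne' hi).trans_le (le_sup' x (mem_univ i))
  rw [wmaxfrac, le_div_iff₀ hM]
  calc (#S : ℝ) * M = ∑ i ∈ S, x i := by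
        rw [sum_congr rfl fun i hi => (mem_filter.1 hi).2, sum_const, nsmul_eq_mul]
    _ ≤ ∑ i, x i := sum_le_sum_of_subset_of_nonneg (subset_univ S) fun i _ _ => hx i

lemma wmaxfrac_indicator {β : Type*} [Zero β] [DecidableEq β] {c : I → β} (hc : c ≠ 0) :
    wmaxfrac (fun i => if c i = 0 then (0 : ℝ) else 1) = hammingNorm c := by
  obtain ⟨i, hi⟩ : ∃ i, c i ≠ 0 := Function.ne_iff.1 hc
  have hsup : univ.sup' univ_nonempty (fun i => if c i = 0 then (0 : ℝ) else 1) = 1 :=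
    le_antisymm (sup'_le _ _ fun j _ => by split_ifs <;> norm_num)
      (le_sup'_of_le _ (mem_univ i) (by simp [hi]))
  rw [wmaxfrac, hsup, div_one, hammingNorm, ← sum_boole]
  exact sum_congr rfl fun j _ => by split_ifs <;> simp_all

end MaxFractionalWeight

section PseudoCodeword

variable {J I : Type*} [Fintype I] [DecidableEq I] {H : J → I → ZMod 2}

theorem indicator_mem_fundCone (hrow : ∀ j, #(univ.filter fun i => H j i = 1) = 2)
    {c : I → ZMod 2} (hc : ∀ j, ∑ i, H j i * c i = 0) :
    (fun i => if c i = 0 then (0 : ℝ) else 1) ∈ fundCone H :=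
  (mem_fundCone_iff hrow).2
    ⟨fun i => by split_ifs <;> norm_num,
      ((isCodeword_iff_rowConstant hrow).1 hc).comp fun t => if t = 0 then 0 else 1⟩

theorem exists_codeword_hammingNorm_le_wmaxfrac [Nonempty I]
    (hrow : ∀ j, #(univ.filter fun i => H j i = 1) = 2) {x : I → ℝ} (hx : x ∈ fundCone H)
    (hx0 : x ≠ 0) :
    ∃ c : I → ZMod 2, c ≠ 0 ∧ (∀ j, ∑ i, H j i * c i = 0) ∧ (hammingNorm c : ℝ) ≤ wmaxfrac x := by
  obtain ⟨hnonneg, hconst⟩ := (mem_fundCone_iff hrow).1 hx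
  obtain ⟨i₀, -, hi₀⟩ := exists_mem_eq_sup' univ_nonempty x
  set M := univ.sup' univ_nonempty x
  set c : I → ZMod 2 := fun i => if x i = M then 1 else 0
  have hc0 : c ≠ 0 := Function.ne_iff.2 ⟨i₀, by simp [c, ← hi₀]⟩
  have hc : ∀ j, ∑ i, H j i * c i = 0 :=
    (isCodeword_iff_rowConstant hrow).2 (hconst.comp fun t => if t = M then 1 else 0)
  have hnorm : hammingNorm c = #(univ.filter fun i => x i = M) := by
    simp [hammingNorm, c]
  refine ⟨c, hc0, hc, ?_⟩
  rw [hnorm]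
  exact card_filter_eq_sup'_le_wmaxfrac hnonneg hx0

end PseudoCodeword

theorem stmt11 {J I : Type*} [Fintype I] [DecidableEq I] [Nonempty I]
    (H : J → I → ZMod 2)
    (hrow : ∀ j, (Finset.univ.filter fun i => H j i = 1).card = 2)
    (d : ℕ)
    (hex : ∃ c : I → ZMod 2, c ≠ 0 ∧ (∀ j, ∑ i, H j i * c i = 0) ∧ hammingNorm c = d)
    (hmin : ∀ c : I → ZMod 2, c ≠ 0 → (∀ j, ∑ i, H j i * c i = 0) → d ≤ hammingNorm c) :
    (∀ x ∈ fundCone H, x ≠ 0 → (d : ℝ) ≤ wmaxfrac x) ∧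
    (∃ x ∈ fundCone H, x ≠ 0 ∧ wmaxfrac x = d) := by
  refine ⟨fun x hx hx0 => ?_, ?_⟩
  · obtain ⟨c, hc0, hc, hle⟩ := exists_codeword_hammingNorm_le_wmaxfrac hrow hx hx0
    exact (Nat.cast_le.2 (hmin c hc0 hc)).trans hle
  · obtain ⟨c, hc0, hc, rfl⟩ := hex
    refine ⟨_, indicator_mem_fundCone hrow hc, fun h => hc0 ?_, wmaxfrac_indicator hc0⟩
    funext i
    simpa using congrFun h i
end
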